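/- arXiv:1605.05168 — 5 statements merged into one kernel-verified Lean document; each statement's English description precedes it below -/
import Mathlib

section
/- Let G be a locally compact Hausdorff group with a left Haar measure μ_G acting continuously and properly on a locally compact Hausdorff space X, and let β be a Bruhat function for the action. Then for every h ∈ C_c(G\X), the function x ↦ β(x)·h(π(x)) belongs to C_c(X) and its orbital mean equals h: ∫_G β(g⁻¹•x)·h(π(g⁻¹•x)) dμ_G(g) = h(π(x)) for all x ∈ X. In particular, the orbital mean operator A : C_c(X) → C_c(G\X), (A f)(π(x)) = ∫_G f(g⁻¹•x) dμ_G(g), is surjective. -/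
open MeasureTheory
open scoped Pointwise

/-! Since `π (g⁻¹ • x) = π x`, the factor `h (π x)` leaves the orbital integral, and
`∫ β (g⁻¹ • x) dμG = 1` gives the mean.  For the support: a compact set of `G\X` is the
image of a compact `C ⊆ X` (as `π` is open and `X` locally compact), so the support of
`β · (h ∘ π)` lies in `tsupport β ∩ G • C`, which is compact by the Bruhat condition. -/

theorem IsOpenMap.exists_isCompact_subset_image {X Y : Type*} [TopologicalSpace X]
    [TopologicalSpace Y] [WeaklyLocallyCompactSpace X] {f : X → Y} (hf : IsOpenMap f)
    {K : Set Y} (hK : IsCompact K) (hKf : K ⊆ Set.range f) :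
    ∃ C : Set X, IsCompact C ∧ K ⊆ f '' C := by
  choose V hVc hVn using fun x : X => exists_compact_mem_nhds x
  have hcover : K ⊆ ⋃ x, f '' interior (V x) := fun y hy => by
    obtain ⟨x, rfl⟩ := hKf hy
    exact Set.mem_iUnion.2 ⟨x, Set.mem_image_of_mem f (mem_interior_iff_mem_nhds.2 (hVn x))⟩
  obtain ⟨t, ht⟩ := hK.elim_finite_subcover _ (fun x => hf _ isOpen_interior) hcover
  refine ⟨⋃ x ∈ t, V x, t.isCompact_biUnion fun x _ => hVc x, ht.trans ?_⟩
  rw [Set.image_iUnion₂]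
  exact Set.biUnion_mono subset_rfl fun x _ => Set.image_mono interior_subset

namespace MulAction

variable {G X : Type*} [Group G] [MulAction G X]

theorem preimage_image_mk_orbitRel (C : Set X) :
    Quotient.mk (orbitRel G X) ⁻¹' (Quotient.mk (orbitRel G X) '' C) =
      {y : X | ∃ g : G, ∃ c ∈ C, y = g • c} := by
  ext y
  simp only [Set.mem_preimage, Set.mem_image, Quotient.eq, orbitRel_apply, mem_orbit_iff,
    Set.mem_ofPred_eq]
  constructor
  · rintro ⟨_, hc, g, rfl⟩
    exact ⟨g⁻¹, g • y, hc, (inv_smul_smul g y).symm⟩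
  · rintro ⟨g, c, hc, rfl⟩
    exact ⟨c, hc, g⁻¹, inv_smul_smul g c⟩

theorem hasCompactSupport_ofReal_mul_comp_mk {𝕜 : Type*} [RCLike 𝕜] [TopologicalSpace G]
    [TopologicalSpace X] [WeaklyLocallyCompactSpace X] [T2Space X] [ContinuousConstSMul G X]
    {β : X → ℝ} (hβ : ∀ C : Set X, IsCompact C →
      IsCompact (tsupport β ∩ {y : X | ∃ g : G, ∃ c ∈ C, y = g • c}))
    {h : Quotient (orbitRel G X) → 𝕜} (hh : HasCompactSupport h) :
    HasCompactSupport fun x : X => (β x : 𝕜) * h (Quotient.mk (orbitRel G X) x) := by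
  obtain ⟨C, hC, hhC⟩ := isOpenQuotientMap_quotientMk.isOpenMap.exists_isCompact_subset_image
    hh (by simp)
  refine HasCompactSupport.intro (hβ C hC) fun x hx => ?_
  by_contra hne
  obtain ⟨hβx, hhx⟩ := mul_ne_zero_iff.1 hne
  refine hx ⟨subset_tsupport β fun h0 => hβx (by simp [h0]), ?_⟩
  rw [← preimage_image_mk_orbitRel]
  exact hhC (subset_tsupport h hhx)

theorem integral_ofReal_mul_comp_mk_inv_smul {𝕜 : Type*} [RCLike 𝕜] [MeasurableSpace G]
    (μ : Measure G) {β : X → ℝ} (hβ : ∀ x : X, ∫ g, β (g⁻¹ • x) ∂μ = 1)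
    (h : Quotient (orbitRel G X) → 𝕜) (x : X) :
    ∫ g, (β (g⁻¹ • x) : 𝕜) * h (Quotient.mk (orbitRel G X) (g⁻¹ • x)) ∂μ =
      h (Quotient.mk (orbitRel G X) x) := by
  have hmk (g : G) : Quotient.mk (orbitRel G X) (g⁻¹ • x) = Quotient.mk (orbitRel G X) x :=
    Quotient.sound (mem_orbit x g⁻¹)
  simp_rw [hmk]
  rw [integral_mul_const, integral_ofReal, hβ, RCLike.ofReal_one, one_mul]

end MulAction

theorem stmt_5_general {G X : Type*}
    [Group G] [TopologicalSpace G]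
    [MeasurableSpace G]
    (μG : Measure G)
    [TopologicalSpace X] [LocallyCompactSpace X] [T2Space X]
    [MulAction G X] [ContinuousSMul G X]
    (β : X → ℝ) (hβcont : Continuous β)
    (hβmean : ∀ x : X, (∫ g, β (g⁻¹ • x) ∂μG) = 1)
    (hβcomp : ∀ C : Set X, IsCompact C →
      (∀ y ∈ {y : X | ∃ g : G, ∃ c ∈ C, y = g • c}, 0 ≤ β y) ∧
      IsCompact (tsupport β ∩ {y : X | ∃ g : G, ∃ c ∈ C, y = g • c})) :
    (∀ h : Quotient (MulAction.orbitRel G X) → ℂ, Continuous h → HasCompactSupport h →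
      Continuous (fun x : X => (β x : ℂ) * h (Quotient.mk (MulAction.orbitRel G X) x)) ∧
      HasCompactSupport
        (fun x : X => (β x : ℂ) * h (Quotient.mk (MulAction.orbitRel G X) x)) ∧
      ∀ x : X,
        (∫ g, (β (g⁻¹ • x) : ℂ) * h (Quotient.mk (MulAction.orbitRel G X) (g⁻¹ • x)) ∂μG)
          = h (Quotient.mk (MulAction.orbitRel G X) x)) ∧
    (∀ h : Quotient (MulAction.orbitRel G X) → ℂ, Continuous h → HasCompactSupport h →
      ∃ f : X → ℂ, Continuous f ∧ HasCompactSupport f ∧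
        ∀ x : X, (∫ g, f (g⁻¹ • x) ∂μG) = h (Quotient.mk (MulAction.orbitRel G X) x)) := by
  have lift : ∀ h : Quotient (MulAction.orbitRel G X) → ℂ, Continuous h → HasCompactSupport h →
      Continuous (fun x : X => (β x : ℂ) * h (Quotient.mk (MulAction.orbitRel G X) x)) ∧
      HasCompactSupport (fun x : X => (β x : ℂ) * h (Quotient.mk (MulAction.orbitRel G X) x)) ∧
      ∀ x : X, (∫ g, (β (g⁻¹ • x) : ℂ) * h (Quotient.mk (MulAction.orbitRel G X) (g⁻¹ • x)) ∂μG)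
        = h (Quotient.mk (MulAction.orbitRel G X) x) := fun h hc hs =>
    ⟨(Complex.continuous_ofReal.comp hβcont).mul (hc.comp continuous_quot_mk),
      MulAction.hasCompactSupport_ofReal_mul_comp_mk (fun C hC => (hβcomp C hC).2) hs,
      MulAction.integral_ofReal_mul_comp_mk_inv_smul μG hβmean h⟩
  exact ⟨lift, fun h hc hs => ⟨_, lift h hc hs⟩⟩

/-- Let `G` be a locally compact Hausdorff group with a left Haar
measure `μG` acting continuously and properly on a locally compact Hausdorff space `X`,
and let `β` be a Bruhat function for the action.  Then for every `h ∈ C_c(G\X)`, the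
function `x ↦ β x · h (π x)` belongs to `C_c(X)` and its orbital mean equals `h`:
`∫ β (g⁻¹ • x) · h (π (g⁻¹ • x)) dμG(g) = h (π x)` for all `x`.  In particular, the
orbital mean operator `A : C_c(X) → C_c(G\X)` is surjective. -/
theorem stmt_5 {G X : Type*}
    [Group G] [TopologicalSpace G] [IsTopologicalGroup G] [LocallyCompactSpace G] [T2Space G]
    [MeasurableSpace G] [BorelSpace G]
    (μG : Measure G) [μG.IsHaarMeasure]
    [TopologicalSpace X] [LocallyCompactSpace X] [T2Space X]
    [MulAction G X] [ContinuousSMul G X]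
    (hproper : ∀ A B : Set X, IsCompact A → IsCompact B →
      IsCompact {g : G | (g • A) ∩ B ≠ ∅})
    (β : X → ℝ) (hβcont : Continuous β)
    (hβmean : ∀ x : X, (∫ g, β (g⁻¹ • x) ∂μG) = 1)
    (hβcomp : ∀ C : Set X, IsCompact C →
      (∀ y ∈ {y : X | ∃ g : G, ∃ c ∈ C, y = g • c}, 0 ≤ β y) ∧
      IsCompact (tsupport β ∩ {y : X | ∃ g : G, ∃ c ∈ C, y = g • c})) :
    (∀ h : Quotient (MulAction.orbitRel G X) → ℂ, Continuous h → HasCompactSupport h →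
      Continuous (fun x : X => (β x : ℂ) * h (Quotient.mk (MulAction.orbitRel G X) x)) ∧
      HasCompactSupport
        (fun x : X => (β x : ℂ) * h (Quotient.mk (MulAction.orbitRel G X) x)) ∧
      ∀ x : X,
        (∫ g, (β (g⁻¹ • x) : ℂ) * h (Quotient.mk (MulAction.orbitRel G X) (g⁻¹ • x)) ∂μG)
          = h (Quotient.mk (MulAction.orbitRel G X) x)) ∧
    (∀ h : Quotient (MulAction.orbitRel G X) → ℂ, Continuous h → HasCompactSupport h →
      ∃ f : X → ℂ, Continuous f ∧ HasCompactSupport f ∧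
        ∀ x : X, (∫ g, f (g⁻¹ • x) ∂μG) = h (Quotient.mk (MulAction.orbitRel G X) x)) :=
  stmt_5_general μG β hβcont hβmean hβcomp
end

section
/- Let G be a locally compact Hausdorff group with left Haar measure μ_G and modular function Δ, acting continuously and properly on a locally compact Hausdorff space X. Let β be a Bruhat function for the action, and let λ : G × X → (0,∞), (g,x) ↦ λ_g(x), be continuous and satisfy the cocycle identity λ_{gh}(x) = λ_g(h•x)·λ_h(x) for all g,h ∈ G and x ∈ X. Then q(x) := ∫_G β(g⁻¹•x)·λ_{g⁻¹}(x)·Δ(g)⁻¹ dμ_G(g) defines a strictly positive function on X (the integral converges), and q satisfies the functional equation q(h⁻¹•x)·λ_{h⁻¹}(x) = Δ(h)·q(x) for all h ∈ G and x ∈ X. -/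
/-!
The integrand `g ↦ β (g⁻¹ • x) · λ_{g⁻¹}(x) · Δ(g)⁻¹` is continuous, and it is compactly supported
because `β` is supported, on the orbit of `x`, in a compact set whose preimage under the orbit map
is compact by properness. It is non-negative, and it vanishes exactly where `g ↦ β (g⁻¹ • x)` does;
the latter has integral `1`, so the integral is positive. The functional equation is the change of
variables `g ↦ h * g` under left invariance of the Haar measure, combined with the cocycle identity
`λ_{(hg)⁻¹}(x) = λ_{g⁻¹}(h⁻¹ • x) · λ_{h⁻¹}(x)` and multiplicativity of `Δ`.
-/

open MeasureTheory
open scoped Pointwise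

theorem hasCompactSupport_comp_inv_smul {G X E : Type*} [Group G] [TopologicalSpace G]
    [IsTopologicalGroup G] [TopologicalSpace X] [MulAction G X] [Zero E]
    (hproper : ∀ A B : Set X, IsCompact A → IsCompact B →
      IsCompact {g : G | (g • A) ∩ B ≠ ∅})
    {f : X → E} {x : X} (hf : IsCompact (tsupport f ∩ MulAction.orbit G x)) :
    HasCompactSupport (fun g : G => f (g⁻¹ • x)) := by
  refine HasCompactSupport.intro (hproper {x} _ isCompact_singleton hf).inv fun g hg => ?_
  by_contra hne
  refine hg (Set.nonempty_iff_ne_empty.mp ⟨g⁻¹ • x, ⟨x, rfl, rfl⟩, ?_⟩)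
  exact ⟨subset_tsupport f hne, g⁻¹, rfl⟩

theorem integral_mul_pos_of_integral_ne_zero {α : Type*} [MeasurableSpace α] {μ : Measure α}
    {f w : α → ℝ} (hf : 0 ≤ f) (hw : ∀ a, 0 < w a) (hfw : Integrable (fun a => f a * w a) μ)
    (h : ∫ a, f a ∂μ ≠ 0) : 0 < ∫ a, f a * w a ∂μ := by
  have hsupp : Function.support (fun a => f a * w a) = Function.support f := by
    ext a
    simp [(hw a).ne']
  rw [integral_pos_iff_support_of_nonneg (fun a => mul_nonneg (hf a) (hw a).le) hfw, hsupp,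
    pos_iff_ne_zero, Ne, Measure.measure_support_eq_zero_iff μ]
  exact fun hzero => h (integral_eq_zero_of_ae hzero)

theorem integral_inv_smul_cocycle_mul_eq {G X : Type*} [Group G] [MeasurableSpace G]
    [MeasurableMul G] [MulAction G X] (μ : Measure G) [μ.IsMulLeftInvariant]
    (β : X → ℝ) (lam : G → X → ℝ)
    (hcocycle : ∀ (g h : G) (x : X), lam (g * h) x = lam g (h • x) * lam h x)
    (Δ : G → ℝ) (hΔmul : ∀ g h : G, Δ (g * h) = Δ g * Δ h) {h : G} (hΔh : Δ h ≠ 0) (x : X) :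
    (∫ g, β (g⁻¹ • (h⁻¹ • x)) * lam g⁻¹ (h⁻¹ • x) * (Δ g)⁻¹ ∂μ) * lam h⁻¹ x
      = Δ h * ∫ g, β (g⁻¹ • x) * lam g⁻¹ x * (Δ g)⁻¹ ∂μ := by
  have hintegrand : ∀ g : G,
      β (g⁻¹ • (h⁻¹ • x)) * lam g⁻¹ (h⁻¹ • x) * (Δ g)⁻¹ * lam h⁻¹ x
        = Δ h * (β ((h * g)⁻¹ • x) * lam (h * g)⁻¹ x * (Δ (h * g))⁻¹) := by
    intro g
    rw [mul_inv_rev, mul_smul, hcocycle, hΔmul, mul_inv]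
    field_simp
  rw [← integral_mul_const, integral_congr_ae (Filter.Eventually.of_forall hintegrand),
    integral_const_mul,
    integral_mul_left_eq_self (fun g : G => β (g⁻¹ • x) * lam g⁻¹ x * (Δ g)⁻¹) h]

theorem stmt_6_general {G X : Type*}
    [Group G] [TopologicalSpace G] [IsTopologicalGroup G]
    [MeasurableSpace G] [BorelSpace G]
    (μG : Measure G) [μG.IsHaarMeasure]
    [TopologicalSpace X]
    [MulAction G X] [ContinuousSMul G X]
    (hproper : ∀ A B : Set X, IsCompact A → IsCompact B →
      IsCompact {g : G | (g • A) ∩ B ≠ ∅})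
    (Δ : G → ℝ) (hΔpos : ∀ g, 0 < Δ g) (hΔcont : Continuous Δ)
    (hΔmul : ∀ g h : G, Δ (g * h) = Δ g * Δ h)
    (β : X → ℝ) (hβcont : Continuous β)
    (hβmean : ∀ x : X, (∫ g, β (g⁻¹ • x) ∂μG) = 1)
    (hβcomp : ∀ C : Set X, IsCompact C →
      (∀ y ∈ {y : X | ∃ g : G, ∃ c ∈ C, y = g • c}, 0 ≤ β y) ∧
      IsCompact (tsupport β ∩ {y : X | ∃ g : G, ∃ c ∈ C, y = g • c}))
    (lam : G → X → ℝ) (hlampos : ∀ g x, 0 < lam g x)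
    (hlamcont : Continuous (fun p : G × X => lam p.1 p.2))
    (hcocycle : ∀ (g h : G) (x : X), lam (g * h) x = lam g (h • x) * lam h x) :
    (∀ x : X, Integrable (fun g : G => β (g⁻¹ • x) * lam g⁻¹ x * (Δ g)⁻¹) μG) ∧
    (∀ x : X, 0 < ∫ g, β (g⁻¹ • x) * lam g⁻¹ x * (Δ g)⁻¹ ∂μG) ∧
    (∀ (h : G) (x : X),
      (∫ g, β (g⁻¹ • (h⁻¹ • x)) * lam g⁻¹ (h⁻¹ • x) * (Δ g)⁻¹ ∂μG) * lam h⁻¹ x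
        = Δ h * ∫ g, β (g⁻¹ • x) * lam g⁻¹ x * (Δ g)⁻¹ ∂μG) := by
  have horbit : ∀ x : X,
      {y : X | ∃ g : G, ∃ c ∈ ({x} : Set X), y = g • c} = MulAction.orbit G x := by
    intro x
    ext y
    simp [MulAction.mem_orbit_iff, eq_comm]
  have hβnonneg : ∀ x : X, 0 ≤ fun g : G => β (g⁻¹ • x) := fun x g =>
    (hβcomp {x} isCompact_singleton).1 _ ⟨g⁻¹, x, rfl, rfl⟩
  have hβsupp : ∀ x : X, HasCompactSupport (fun g : G => β (g⁻¹ • x)) := fun x =>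
    hasCompactSupport_comp_inv_smul hproper (horbit x ▸ (hβcomp {x} isCompact_singleton).2)
  have hint : ∀ x : X, Integrable (fun g : G => β (g⁻¹ • x) * lam g⁻¹ x * (Δ g)⁻¹) μG := by
    intro x
    have hcont : Continuous (fun g : G => β (g⁻¹ • x) * (lam g⁻¹ x * (Δ g)⁻¹)) :=
      (hβcont.comp (continuous_inv.smul continuous_const)).mul <|
        (hlamcont.comp (continuous_inv.prodMk continuous_const)).mul
          (hΔcont.inv₀ fun g => (hΔpos g).ne')
    simpa only [mul_assoc] using hcont.integrable_of_hasCompactSupport (μ := μG)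
      (hβsupp x).mul_right
  refine ⟨hint, fun x => ?_, fun h x =>
    integral_inv_smul_cocycle_mul_eq μG β lam hcocycle Δ hΔmul (hΔpos h).ne' x⟩
  have hweight_pos : ∀ g : G, 0 < lam g⁻¹ x * (Δ g)⁻¹ := fun g =>
    mul_pos (hlampos g⁻¹ x) (inv_pos.mpr (hΔpos g))
  simpa only [mul_assoc] using integral_mul_pos_of_integral_ne_zero (hβnonneg x) hweight_pos
    (by simpa only [mul_assoc] using hint x) (by simp [hβmean])

/-- Let `G` be a locally compact Hausdorff group with left Haar measure
`μG` and modular function `Δ`, acting continuously and properly on a locally compact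
Hausdorff space `X`.  Let `β` be a Bruhat function for the action and let
`lam : G × X → (0,∞)` be continuous with the cocycle identity
`lam (g*h) x = lam g (h • x) · lam h x`.  Then
`q x := ∫ β (g⁻¹ • x) · lam g⁻¹ x · (Δ g)⁻¹ dμG(g)` is well defined (the integrand is
integrable), strictly positive, and satisfies
`q (h⁻¹ • x) · lam h⁻¹ x = Δ h · q x` for all `h ∈ G`, `x ∈ X`. -/
theorem stmt_6 {G X : Type*}
    [Group G] [TopologicalSpace G] [IsTopologicalGroup G] [LocallyCompactSpace G] [T2Space G]
    [MeasurableSpace G] [BorelSpace G]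
    (μG : Measure G) [μG.IsHaarMeasure]
    [TopologicalSpace X] [LocallyCompactSpace X] [T2Space X]
    [MulAction G X] [ContinuousSMul G X]
    (hproper : ∀ A B : Set X, IsCompact A → IsCompact B →
      IsCompact {g : G | (g • A) ∩ B ≠ ∅})
    (Δ : G → ℝ) (hΔpos : ∀ g, 0 < Δ g) (hΔcont : Continuous Δ)
    (hΔmul : ∀ g h : G, Δ (g * h) = Δ g * Δ h)
    (hΔmod : ∀ f : G → ℂ, Continuous f → HasCompactSupport f → ∀ h : G,
      (∫ g, f (g * h) ∂μG) = ((Δ h : ℂ))⁻¹ * ∫ g, f g ∂μG)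
    (β : X → ℝ) (hβcont : Continuous β)
    (hβmean : ∀ x : X, (∫ g, β (g⁻¹ • x) ∂μG) = 1)
    (hβcomp : ∀ C : Set X, IsCompact C →
      (∀ y ∈ {y : X | ∃ g : G, ∃ c ∈ C, y = g • c}, 0 ≤ β y) ∧
      IsCompact (tsupport β ∩ {y : X | ∃ g : G, ∃ c ∈ C, y = g • c}))
    (lam : G → X → ℝ) (hlampos : ∀ g x, 0 < lam g x)
    (hlamcont : Continuous (fun p : G × X => lam p.1 p.2))
    (hcocycle : ∀ (g h : G) (x : X), lam (g * h) x = lam g (h • x) * lam h x) :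
    (∀ x : X, Integrable (fun g : G => β (g⁻¹ • x) * lam g⁻¹ x * (Δ g)⁻¹) μG) ∧
    (∀ x : X, 0 < ∫ g, β (g⁻¹ • x) * lam g⁻¹ x * (Δ g)⁻¹ ∂μG) ∧
    (∀ (h : G) (x : X),
      (∫ g, β (g⁻¹ • (h⁻¹ • x)) * lam g⁻¹ (h⁻¹ • x) * (Δ g)⁻¹ ∂μG) * lam h⁻¹ x
        = Δ h * ∫ g, β (g⁻¹ • x) * lam g⁻¹ x * (Δ g)⁻¹ ∂μG) :=
  stmt_6_general μG hproper Δ hΔpos hΔcont hΔmul β hβcont hβmean hβcomp lam hlampos hlamcont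
    hcocycle
end

section
/- Let G be a second countable locally compact abelian group with Haar measure μ_G acting continuously on a second countable locally compact Hausdorff space X. Let Ĝ denote the set of continuous characters χ : G → 𝕋, and let ν_Ĝ be a measure on Ĝ satisfying the Plancherel identity: ∫_Ĝ |ĥ(χ)|² dν_Ĝ(χ) = ∫_G |h|² dμ_G for all h ∈ L¹(G, μ_G) ∩ L²(G, μ_G), where ĥ(χ) = ∫_G h(g)·conj(χ(g)) dμ_G(g). Let μ# be a Radon measure on X and ν a Radon measure on the orbit space G\X satisfying the extended Weil formula: for every non-negative Borel function h on X, ∫_X h dμ# = ∫_{G\X} H dν, where H is induced by the G-invariant function x ↦ ∫_G h(g⁻¹•x) dμ_G(g). Then for every f ∈ L¹(X, μ#) ∩ L²(X, μ#): ∫_X |f|² dμ# = ∫_{G\X} (∫_Ĝ |Z f(x,χ)|² dν_Ĝ(χ)) dν, where Z f(x,χ) = ∫_G f(g⁻¹•x)·conj(χ(g)) dμ_G(g) and the inner integral ∫_Ĝ |Z f(x,χ)|² dν_Ĝ(χ) is constant along each orbit. -/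
open MeasureTheory
open scoped ENNReal

/-- The set `Ĝ` of continuous characters of `G`: continuous multiplicative maps from `G`
into the circle group `𝕋 ⊆ ℂ`. -/
abbrev ContChar (G : Type*) [Group G] [TopologicalSpace G] :=
  {χ : G → ℂ // Continuous χ ∧ (∀ g, ‖χ g‖ = 1) ∧ ∀ g h : G, χ (g * h) = χ g * χ h}

/-!
Translating the base point by `g₀` multiplies `Z f (x, ·)` by the unimodular factor
`conj (χ g₀⁻¹)` (left invariance of Haar measure), so `|Z f|` is constant along orbits.
For the isometry, the Weil formula transports null sets and finiteness of integrals from `X`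
to `ν`-almost every orbit; on such an orbit the fibre `g ↦ f (g⁻¹ • x)` lies in
`L¹ ∩ L²(G)`, Plancherel turns the inner integral into `∫_G |f (g⁻¹ • x)|²`, and the Weil
formula once more gives `∫_X |f|²`.
-/

open ComplexConjugate

section OrbitIntegral

variable {G X : Type*} [Group G] [MeasurableSpace G] [MeasurableMul G] [MulAction G X]
  (μ : Measure G) [μ.IsMulLeftInvariant]

lemma lintegral_inv_smul_smul (h : X → ℝ≥0∞) (g₀ : G) (x : X) :
    ∫⁻ g, h (g⁻¹ • g₀ • x) ∂μ = ∫⁻ g, h (g⁻¹ • x) ∂μ := by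
  rw [← lintegral_mul_left_eq_self (fun g => h (g⁻¹ • g₀ • x)) g₀]
  simp only [mul_inv_rev, mul_smul, inv_smul_smul]

noncomputable def orbitLIntegral (h : X → ℝ≥0∞) : Quotient (MulAction.orbitRel G X) → ℝ≥0∞ :=
  Quotient.lift (fun x => ∫⁻ g, h (g⁻¹ • x) ∂μ) <| by
    rintro _ x ⟨g₀, rfl⟩
    exact lintegral_inv_smul_smul μ h g₀ x

@[simp]
lemma orbitLIntegral_mk (h : X → ℝ≥0∞) (x : X) :
    orbitLIntegral μ h (Quotient.mk _ x) = ∫⁻ g, h (g⁻¹ • x) ∂μ := rfl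

lemma measurable_orbitLIntegral [MeasurableInv G] [MeasurableSpace X] [MeasurableSMul₂ G X]
    [SFinite μ] {h : X → ℝ≥0∞} (hh : Measurable h) : Measurable (orbitLIntegral μ h) := by
  rw [measurable_from_quotient]
  exact Measurable.lintegral_prod_right (f := fun x g => h (g⁻¹ • x))
    (hh.comp (measurable_snd.inv.smul measurable_fst))

def WeilFormula [MeasurableSpace X] (μs : Measure X)
    (ν : Measure (Quotient (MulAction.orbitRel G X))) : Prop :=
  ∀ h : X → ℝ≥0∞, Measurable h → ∫⁻ x, h x ∂μs = ∫⁻ ξ, orbitLIntegral μ h ξ ∂ν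

end OrbitIntegral

section Weil

variable {G X : Type*} [Group G] [MeasurableSpace G] [MeasurableMul G] [MeasurableInv G]
  [MulAction G X] [MeasurableSpace X] [MeasurableSMul₂ G X]

namespace WeilFormula

variable {μ : Measure G} [μ.IsMulLeftInvariant] [SFinite μ] {μs : Measure X}
  {ν : Measure (Quotient (MulAction.orbitRel G X))} (hW : WeilFormula μ μs ν)
include hW

lemma ae_orbitLIntegral_lt_top {h : X → ℝ≥0∞} (hh : Measurable h) (hfin : ∫⁻ x, h x ∂μs ≠ ∞) :
    ∀ᵐ ξ ∂ν, orbitLIntegral μ h ξ < ∞ :=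
  ae_lt_top (measurable_orbitLIntegral μ hh) (hW h hh ▸ hfin)

lemma ae_ae_inv_smul {p : X → Prop} (hp : ∀ᵐ x ∂μs, p x) :
    ∀ᵐ ξ ∂ν, ∀ x, Quotient.mk _ x = ξ → ∀ᵐ g ∂μ, p (g⁻¹ • x) := by
  set s := toMeasurable μs {x | ¬ p x}
  have hs : MeasurableSet s := measurableSet_toMeasurable _ _
  have hmeas : Measurable (s.indicator (1 : X → ℝ≥0∞)) := measurable_one.indicator hs
  have hnull : ∫⁻ ξ, orbitLIntegral μ (s.indicator 1) ξ ∂ν = 0 := by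
    rw [← hW _ hmeas, lintegral_indicator_one hs, measure_toMeasurable]
    exact hp
  filter_upwards [(lintegral_eq_zero_iff (measurable_orbitLIntegral μ hmeas)).1 hnull]
    with _ hξ x rfl
  filter_upwards [(lintegral_eq_zero_iff (hmeas.comp (measurable_inv.smul_const x))).1 hξ]
    with g hg
  by_contra hpg
  simp only [Function.comp_apply, Pi.zero_apply, Set.indicator_apply_eq_zero, Pi.one_apply,
    one_ne_zero, imp_false] at hg
  exact hg (subset_toMeasurable _ _ hpg)

lemma ae_integrable_inv_smul {E : Type*} [NormedAddCommGroup E] {φ : X → E}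
    (hφ : Integrable φ μs) :
    ∀ᵐ ξ ∂ν, ∀ x, Quotient.mk _ x = ξ → Integrable (fun g => φ (g⁻¹ • x)) μ := by
  obtain ⟨φ', hφ'm, hφφ'⟩ := hφ.1
  have hm : Measurable fun x => ‖φ' x‖ₑ := hφ'm.enorm
  filter_upwards [hW.ae_ae_inv_smul hφφ',
    hW.ae_orbitLIntegral_lt_top hm (hφ.congr hφφ').2.ne] with _ heq hfin x rfl
  refine Integrable.congr
    ⟨(hφ'm.comp_measurable (measurable_inv.smul_const x)).aestronglyMeasurable, hfin⟩ ?_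
  filter_upwards [heq x rfl] with g hg using hg.symm

lemma integral_eq_integral_quotient {ψ : X → ℝ} (hψ0 : 0 ≤ ψ) (hψ : Integrable ψ μs)
    {Ψ : Quotient (MulAction.orbitRel G X) → ℝ}
    (hΨ : ∀ᵐ ξ ∂ν, ∀ x, Quotient.mk _ x = ξ → Ψ ξ = ∫ g, ψ (g⁻¹ • x) ∂μ) :
    ∫ x, ψ x ∂μs = ∫ ξ, Ψ ξ ∂ν := by
  obtain ⟨ψ', hψ'm, hψψ'⟩ := hψ.1
  set h : X → ℝ≥0∞ := fun x => ENNReal.ofReal (ψ' x)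
  have hm : Measurable h := hψ'm.measurable.ennreal_ofReal
  have hψh : ∀ y, ψ y = ψ' y → ψ y = (h y).toReal := fun y hy => by
    rw [ENNReal.toReal_ofReal (hy ▸ hψ0 y), hy]
  have hh_lt_top : ∀ y, h y < ∞ := fun _ => ENNReal.ofReal_lt_top
  calc ∫ x, ψ x ∂μs = ∫ x, (h x).toReal ∂μs := integral_congr_ae (hψψ'.mono hψh)
    _ = (∫⁻ x, h x ∂μs).toReal := integral_toReal hm.aemeasurable (ae_of_all _ hh_lt_top)
    _ = (∫⁻ ξ, orbitLIntegral μ h ξ ∂ν).toReal := by rw [hW h hm]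
    _ = ∫ ξ, (orbitLIntegral μ h ξ).toReal ∂ν :=
      (integral_toReal (measurable_orbitLIntegral μ hm).aemeasurable
        (hW.ae_orbitLIntegral_lt_top hm (hψ.congr hψψ').lintegral_lt_top.ne)).symm
    _ = ∫ ξ, Ψ ξ ∂ν := integral_congr_ae ?_
  filter_upwards [hΨ, hW.ae_ae_inv_smul hψψ'] with ξ hΨξ heq
  obtain ⟨x, rfl⟩ := ξ.exists_rep
  rw [hΨξ x rfl, orbitLIntegral_mk, ← integral_toReal (f := fun g => h (g⁻¹ • x))
    (hm.comp (measurable_inv.smul_const x)).aemeasurable (ae_of_all _ fun _ => hh_lt_top _)]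
  exact integral_congr_ae ((heq x rfl).mono fun g hg => (hψh _ hg).symm)

end WeilFormula

end Weil

section Zak

variable {G X : Type*} [Group G] [TopologicalSpace G] [MeasurableSpace G] [MeasurableMul G]
  [MulAction G X] (μ : Measure G) [μ.IsMulLeftInvariant]

noncomputable def zakTransform (f : X → ℂ) (x : X) (χ : ContChar G) : ℂ :=
  ∫ g, f (g⁻¹ • x) * conj (χ.1 g) ∂μ

lemma zakTransform_inv_smul (f : X → ℂ) (g₀ : G) (x : X) (χ : ContChar G) :
    zakTransform μ f (g₀⁻¹ • x) χ = conj (χ.1 g₀⁻¹) * zakTransform μ f x χ := by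
  rw [zakTransform, zakTransform, ← integral_const_mul]
  conv_lhs => rw [← integral_mul_left_eq_self _ g₀⁻¹]
  congr 1 with g
  simp only [mul_inv_rev, inv_inv, mul_smul, smul_inv_smul, χ.2.2.2, map_mul]
  ring

lemma norm_zakTransform_inv_smul (f : X → ℂ) (g₀ : G) (x : X) (χ : ContChar G) :
    ‖zakTransform μ f (g₀⁻¹ • x) χ‖ = ‖zakTransform μ f x χ‖ := by
  rw [zakTransform_inv_smul, norm_mul, Complex.norm_conj, χ.2.2.1, one_mul]

end Zak

theorem stmt_10_general {G X : Type*}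
    [CommGroup G] [TopologicalSpace G] [IsTopologicalGroup G] [LocallyCompactSpace G]
    [SecondCountableTopology G] [MeasurableSpace G] [BorelSpace G]
    (μG : Measure G) [μG.IsHaarMeasure]
    [TopologicalSpace X]
    [MulAction G X] [ContinuousSMul G X]
    [MeasurableSpace X] [BorelSpace X]
    (νhat : Measure (ContChar G))
    (hPlancherel : ∀ h : G → ℂ, Integrable h μG → MemLp h 2 μG →
      (∫ χ : ContChar G, ‖∫ g, h g * (starRingEnd ℂ) (χ.1 g) ∂μG‖ ^ 2 ∂νhat)
        = ∫ g, ‖h g‖ ^ 2 ∂μG)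
    (μs : Measure X) (ν : Measure (Quotient (MulAction.orbitRel G X)))
    (hWeil : ∀ h : X → ℝ≥0∞, Measurable h →
      ∀ H : Quotient (MulAction.orbitRel G X) → ℝ≥0∞,
        (∀ x : X, H (Quotient.mk (MulAction.orbitRel G X) x) = ∫⁻ g, h (g⁻¹ • x) ∂μG) →
        (∫⁻ x, h x ∂μs) = ∫⁻ ξ, H ξ ∂ν) :
    ∀ f : X → ℂ, Integrable f μs → MemLp f 2 μs →
      (∀ (g : G) (x : X),
        (∫ χ : ContChar G,
            ‖∫ g', f (g'⁻¹ • (g⁻¹ • x)) * (starRingEnd ℂ) (χ.1 g') ∂μG‖ ^ 2 ∂νhat)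
          = ∫ χ : ContChar G,
              ‖∫ g', f (g'⁻¹ • x) * (starRingEnd ℂ) (χ.1 g') ∂μG‖ ^ 2 ∂νhat) ∧
      (∀ F : Quotient (MulAction.orbitRel G X) → ℝ,
        (∀ x : X, F (Quotient.mk (MulAction.orbitRel G X) x)
            = ∫ χ : ContChar G,
                ‖∫ g, f (g⁻¹ • x) * (starRingEnd ℂ) (χ.1 g) ∂μG‖ ^ 2 ∂νhat) →
        (∫ x, ‖f x‖ ^ 2 ∂μs) = ∫ ξ, F ξ ∂ν) := by
  intro f hf hf2
  refine ⟨fun g x => ?_, fun F hF => ?_⟩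
  · exact congrArg (integral νhat) <|
      funext fun χ => congrArg (· ^ 2) (norm_zakTransform_inv_smul μG f g x χ)
  have hW : WeilFormula μG μs ν := fun h hh => hWeil h hh _ fun _ => rfl
  have hf2' : Integrable (fun x => ‖f x‖ ^ 2) μs :=
    (memLp_two_iff_integrable_sq_norm hf.1).1 hf2
  refine hW.integral_eq_integral_quotient (fun x => sq_nonneg _) hf2' ?_
  filter_upwards [hW.ae_integrable_inv_smul hf, hW.ae_integrable_inv_smul hf2']
    with _ hfx hf2x x rfl
  rw [hF x]
  exact hPlancherel _ (hfx x rfl)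
    ((memLp_two_iff_integrable_sq_norm (hfx x rfl).1).2 (hf2x x rfl))

/-- **Isometry property of the abelian Zak transform.**  Let `G` be a
second countable locally compact abelian group with Haar measure `μG` acting continuously
on a second countable locally compact Hausdorff space `X`.  Let `νĜ` be a measure on the
set `Ĝ` of continuous characters satisfying the Plancherel identity, and let `(μ#, ν)`
satisfy the extended Weil formula.  Then for every `f ∈ L¹(X, μ#) ∩ L²(X, μ#)` the inner
integral `∫_Ĝ |Z f (x, χ)|² dνĜ(χ)` is constant along each orbit and
`∫_X |f|² dμ# = ∫_{G\X} (∫_Ĝ |Z f (x, χ)|² dνĜ(χ)) dν`, where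
`Z f (x, χ) = ∫_G f (g⁻¹ • x) · conj (χ g) dμG(g)`. -/
theorem stmt_10 {G X : Type*}
    [CommGroup G] [TopologicalSpace G] [IsTopologicalGroup G] [LocallyCompactSpace G]
    [T2Space G] [SecondCountableTopology G] [MeasurableSpace G] [BorelSpace G]
    (μG : Measure G) [μG.IsHaarMeasure]
    [TopologicalSpace X] [LocallyCompactSpace X] [T2Space X] [SecondCountableTopology X]
    [MulAction G X] [ContinuousSMul G X]
    [MeasurableSpace X] [BorelSpace X]
    (νhat : Measure (ContChar G))
    (hPlancherel : ∀ h : G → ℂ, Integrable h μG → MemLp h 2 μG →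
      (∫ χ : ContChar G, ‖∫ g, h g * (starRingEnd ℂ) (χ.1 g) ∂μG‖ ^ 2 ∂νhat)
        = ∫ g, ‖h g‖ ^ 2 ∂μG)
    (μs : Measure X) (ν : Measure (Quotient (MulAction.orbitRel G X)))
    (hWeil : ∀ h : X → ℝ≥0∞, Measurable h →
      ∀ H : Quotient (MulAction.orbitRel G X) → ℝ≥0∞,
        (∀ x : X, H (Quotient.mk (MulAction.orbitRel G X) x) = ∫⁻ g, h (g⁻¹ • x) ∂μG) →
        (∫⁻ x, h x ∂μs) = ∫⁻ ξ, H ξ ∂ν) :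
    ∀ f : X → ℂ, Integrable f μs → MemLp f 2 μs →
      (∀ (g : G) (x : X),
        (∫ χ : ContChar G,
            ‖∫ g', f (g'⁻¹ • (g⁻¹ • x)) * (starRingEnd ℂ) (χ.1 g') ∂μG‖ ^ 2 ∂νhat)
          = ∫ χ : ContChar G,
              ‖∫ g', f (g'⁻¹ • x) * (starRingEnd ℂ) (χ.1 g') ∂μG‖ ^ 2 ∂νhat) ∧
      (∀ F : Quotient (MulAction.orbitRel G X) → ℝ,
        (∀ x : X, F (Quotient.mk (MulAction.orbitRel G X) x)
            = ∫ χ : ContChar G,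
                ‖∫ g, f (g⁻¹ • x) * (starRingEnd ℂ) (χ.1 g) ∂μG‖ ^ 2 ∂νhat) →
        (∫ x, ‖f x‖ ^ 2 ∂μs) = ∫ ξ, F ξ ∂ν) :=
  stmt_10_general μG νhat hPlancherel μs ν hWeil
end

section
/- Let G be a topological group, H a compact subgroup equipped with its normalized Haar probability measure μ_H, and let σ and σ' be irreducible continuous unitary representations of G on the same complex Hilbert space E (irreducible meaning the only closed subspaces of E invariant under all σ(g) are {0} and E, and likewise for σ'). Let P (resp. P') be the orthogonal projection of E onto the closed subspace of vectors fixed by σ(h) (resp. σ'(h)) for all h ∈ H. If P ≠ 0 and σ(g)∘P = σ'(g)∘P' for all g ∈ G, then σ = σ'. -/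
open scoped InnerProductSpace

/-!
The vectors on which `σ g` and `σ' g` agree for every `g` form a closed subspace, and it is
`σ`-invariant because `σ g (σ k x) = σ (g * k) x = σ' (g * k) x = σ' g (σ' k x)`.
Taking `g = 1` in `σ g (P v) = σ' g (P' v)` shows `P v = P' v`, so the range of `P` lies in
this subspace; as `P ≠ 0`, irreducibility of `σ` forces it to be everything.
-/

namespace MonoidHom

variable {G R E : Type*} [Monoid G] [Semiring R] [NormedAddCommGroup E] [Module R E]

def agreementLocus (σ σ' : G →* (E ≃ₗᵢ[R] E)) : Submodule R E :=
  ⨅ g, LinearMap.eqLocus (σ g).toLinearMap (σ' g).toLinearMap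

variable {σ σ' : G →* (E ≃ₗᵢ[R] E)} {x y : E}

theorem mem_agreementLocus : x ∈ agreementLocus σ σ' ↔ ∀ g, σ g x = σ' g x := by
  simp [agreementLocus]

theorem isClosed_agreementLocus : IsClosed (agreementLocus σ σ' : Set E) := by
  rw [agreementLocus, Submodule.coe_iInf]
  exact isClosed_iInter fun g => isClosed_eq (σ g).continuous (σ' g).continuous

theorem map_mem_agreementLocus (hx : x ∈ agreementLocus σ σ') (k : G) :
    σ k x ∈ agreementLocus σ σ' := by
  rw [mem_agreementLocus] at hx ⊢
  intro g
  calc σ g (σ k x) = σ (g * k) x := by simp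
    _ = σ' (g * k) x := hx _
    _ = σ' g (σ k x) := by simp [hx k]

theorem mem_agreementLocus_of_forall_eq (h : ∀ g, σ g x = σ' g y) :
    x ∈ agreementLocus σ σ' := by
  have hxy : x = y := by simpa using h 1
  subst hxy
  exact mem_agreementLocus.mpr h

theorem eq_of_mem_agreementLocus_of_irreducible
    (hσirr : ∀ V : Submodule R E, IsClosed (V : Set E) →
      (∀ g : G, ∀ v ∈ V, σ g v ∈ V) → V = ⊥ ∨ V = ⊤)
    (hx : x ∈ agreementLocus σ σ') (hx₀ : x ≠ 0) : σ = σ' := by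
  have hne : agreementLocus σ σ' ≠ ⊥ := fun h => hx₀ (by simpa [h] using hx)
  have htop : agreementLocus σ σ' = ⊤ :=
    (hσirr _ isClosed_agreementLocus fun g _ hv => map_mem_agreementLocus hv g).resolve_left hne
  ext g v
  exact mem_agreementLocus.mp (htop ▸ Submodule.mem_top) g

end MonoidHom

theorem stmt_12_general {G E : Type*}
    [Group G]
    [NormedAddCommGroup E] [InnerProductSpace ℂ E]
    (σ σ' : G →* (E ≃ₗᵢ[ℂ] E))
    (hσirr : ∀ V : Submodule ℂ E, IsClosed (V : Set E) →
      (∀ g : G, ∀ v ∈ V, σ g v ∈ V) → V = ⊥ ∨ V = ⊤)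
    (P P' : E →L[ℂ] E)
    (hPne : P ≠ 0)
    (hcomp : ∀ (g : G) (v : E), σ g (P v) = σ' g (P' v)) :
    σ = σ' := by
  obtain ⟨v, hv⟩ : ∃ v, P v ≠ 0 := by simpa [DFunLike.ne_iff] using hPne
  exact MonoidHom.eq_of_mem_agreementLocus_of_irreducible hσirr
    (MonoidHom.mem_agreementLocus_of_forall_eq (hcomp · v)) hv

/-- Let `G` be a topological group, `H` a compact subgroup, and `σ, σ'`
irreducible continuous unitary representations of `G` on the same complex Hilbert space
`E` (unitary operators realized as linear isometric equivalences).  Let `P` (resp. `P'`)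
be the orthogonal projection of `E` onto the closed subspace of `H`-fixed vectors of `σ`
(resp. `σ'`), characterized by: `P v` is `H`-fixed and `v - P v` is orthogonal to every
`H`-fixed vector.  If `P ≠ 0` and `σ g ∘ P = σ' g ∘ P'` for all `g ∈ G`, then `σ = σ'`. -/
theorem stmt_12 {G E : Type*}
    [Group G] [TopologicalSpace G] [IsTopologicalGroup G]
    [NormedAddCommGroup E] [InnerProductSpace ℂ E] [CompleteSpace E]
    (H : Subgroup G) (hHcomp : IsCompact (H : Set G))
    (σ σ' : G →* (E ≃ₗᵢ[ℂ] E))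
    (hσcont : ∀ v : E, Continuous fun g : G => σ g v)
    (hσ'cont : ∀ v : E, Continuous fun g : G => σ' g v)
    (hσirr : ∀ V : Submodule ℂ E, IsClosed (V : Set E) →
      (∀ g : G, ∀ v ∈ V, σ g v ∈ V) → V = ⊥ ∨ V = ⊤)
    (hσ'irr : ∀ V : Submodule ℂ E, IsClosed (V : Set E) →
      (∀ g : G, ∀ v ∈ V, σ' g v ∈ V) → V = ⊥ ∨ V = ⊤)
    (P P' : E →L[ℂ] E)
    (hPfix : ∀ v : E, ∀ h ∈ H, σ h (P v) = P v)
    (hPorth : ∀ v w : E, (∀ h ∈ H, σ h w = w) → ⟪v - P v, w⟫_ℂ = 0)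
    (hP'fix : ∀ v : E, ∀ h ∈ H, σ' h (P' v) = P' v)
    (hP'orth : ∀ v w : E, (∀ h ∈ H, σ' h w = w) → ⟪v - P' v, w⟫_ℂ = 0)
    (hPne : P ≠ 0)
    (hcomp : ∀ (g : G) (v : E), σ g (P v) = σ' g (P' v)) :
    σ = σ' :=
  stmt_12_general σ σ' hσirr P P' hPne hcomp
end

section
/- Let G be a locally compact Hausdorff group whose left Haar measure μ_G is also right-invariant (G unimodular), let H ⊆ G be a compact subgroup with normalized Haar probability measure μ_H, let σ be a continuous unitary representation of G on a complex Hilbert space E, and let P be the orthogonal projection of E onto the H-fixed vectors {v ∈ E | σ(h)v = v for all h ∈ H}. Then for every f ∈ C_c(G) and every v ∈ E: ∫_G (∫_H f(gh) dμ_H(h))·σ(g)⁻¹v dμ_G(g) = P(∫_G f(g)·σ(g)⁻¹v dμ_G(g)); in other words, the G-Fourier coefficient of the right orbital mean A_R f, where A_R f(g) = ∫_H f(gh) dμ_H(h), equals P composed with the Fourier coefficient f̂(σ) = ∫_G f(g)σ(g)* dμ_G(g). -/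
/-!
Swapping the integrals over `G` and `H` (Fubini for compactly supported continuous integrands)
and substituting `g ↦ g h⁻¹` (right invariance of `μG`) turns the left-hand side into the
`H`-average `∫_H σ(h) w dμH(h)` of `w = f̂(σ) v`. By invariance of `μH` this average is
`H`-fixed, and since `σ(h)` is unitary it has the same inner product as `w` with every
`H`-fixed vector; these two properties characterise `P w`.
-/

open MeasureTheory
open scoped InnerProductSpace

section FourierCoeff

variable {G E : Type*} [Group G] [MeasurableSpace G] [NormedAddCommGroup E] [NormedSpace ℂ E]

noncomputable def groupFourierCoeff (σ : G →* (E ≃ₗᵢ[ℂ] E)) (μ : Measure G) (f : G → ℂ)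
    (v : E) : E :=
  ∫ g, f g • σ g⁻¹ v ∂μ

theorem groupFourierCoeff_comp_mul_right [MeasurableMul G] (σ : G →* (E ≃ₗᵢ[ℂ] E))
    (μ : Measure G) [μ.IsMulRightInvariant] (f : G → ℂ) (h : G) (v : E) :
    groupFourierCoeff σ μ (fun g => f (g * h)) v = σ h (groupFourierCoeff σ μ f v) := by
  have hshift : ∀ g, f (g * h) • σ g⁻¹ v = σ h (f (g * h) • σ (g * h)⁻¹ v) := fun g => by
    rw [LinearIsometryEquiv.map_smul, ← Function.comp_apply (f := σ h),
      ← LinearIsometryEquiv.coe_mul, ← map_mul, mul_inv_rev, mul_inv_cancel_left]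
  calc ∫ g, f (g * h) • σ g⁻¹ v ∂μ
      = ∫ g, σ h (f (g * h) • σ (g * h)⁻¹ v) ∂μ := by simp only [hshift]
    _ = ∫ g, σ h (f g • σ g⁻¹ v) ∂μ :=
      integral_mul_right_eq_self (fun g => σ h (f g • σ g⁻¹ v)) h
    _ = σ h (∫ g, f g • σ g⁻¹ v ∂μ) := (σ h).toContinuousLinearEquiv.integral_comp_comm _

end FourierCoeff

theorem HasCompactSupport.comp_mul_subgroup {G β : Type*} [Group G] [TopologicalSpace G]
    [IsTopologicalGroup G] [Zero β] {f : G → β} (hf : HasCompactSupport f) {H : Subgroup G}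
    (hH : IsCompact (H : Set G)) :
    HasCompactSupport fun p : G × H => f (p.1 * p.2) := by
  refine HasCompactSupport.intro ((hf.mul hH).prod (isCompact_iff_isCompact_univ.mp hH))
    fun ⟨g, h⟩ hgh => ?_
  by_contra hne
  refine hgh ⟨?_, Set.mem_univ _⟩
  rw [← mul_inv_cancel_right g (h : G)]
  exact Set.mul_mem_mul (subset_tsupport f hne) (H.inv_mem h.2)

theorem groupFourierCoeff_integral_comp_mul {G E : Type*} [Group G] [TopologicalSpace G]
    [IsTopologicalGroup G] [MeasurableSpace G] [BorelSpace G] [NormedAddCommGroup E]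
    [NormedSpace ℂ E] [CompleteSpace E] (σ : G →* (E ≃ₗᵢ[ℂ] E))
    (hσ : ∀ v : E, Continuous fun g => σ g v) (μG : Measure G) [IsFiniteMeasureOnCompacts μG]
    {H : Subgroup G} (hH : IsCompact (H : Set G))
    (μH : Measure H) [IsFiniteMeasureOnCompacts μH] {f : G → ℂ} (hf : Continuous f)
    (hfc : HasCompactSupport f) (v : E) :
    groupFourierCoeff σ μG (fun g => ∫ h : H, f (g * h) ∂μH) v
      = ∫ h : H, groupFourierCoeff σ μG (fun g => f (g * h)) v ∂μH := by
  have : BorelSpace H := Subtype.borelSpace _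
  have hcont : Continuous fun p : G × H => f (p.1 * p.2) • σ p.1⁻¹ v := by fun_prop
  have hsupp : HasCompactSupport fun p : G × H => f (p.1 * p.2) • σ p.1⁻¹ v :=
    (hfc.comp_mul_subgroup hH).smul_right
  calc ∫ g, (∫ h : H, f (g * h) ∂μH) • σ g⁻¹ v ∂μG
      = ∫ g, ∫ h : H, f (g * h) • σ g⁻¹ v ∂μH ∂μG := by simp only [integral_smul_const]
    _ = ∫ h : H, ∫ g, f (g * h) • σ g⁻¹ v ∂μG ∂μH :=
      integral_integral_swap_of_hasCompactSupport
        (f := fun g (h : H) => f (g * h) • σ g⁻¹ v) hcont hsupp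

section FixedVectors

variable {G E : Type*} [Group G] [NormedAddCommGroup E] [InnerProductSpace ℂ E]

def fixedSubmodule (σ : G →* (E ≃ₗᵢ[ℂ] E)) (H : Subgroup G) : Submodule ℂ E where
  carrier := {v | ∀ h ∈ H, σ h v = v}
  add_mem' hv hw h hh := by rw [map_add, hv h hh, hw h hh]
  zero_mem' h _ := map_zero (σ h)
  smul_mem' c v hv h hh := by rw [LinearIsometryEquiv.map_smul, hv h hh]

variable (σ : G →* (E ≃ₗᵢ[ℂ] E)) {H : Subgroup G} [MeasurableSpace H] (μH : Measure H)

theorem integral_apply_mem_fixedSubmodule [MeasurableMul H] [μH.IsMulLeftInvariant] (w : E) :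
    ∫ h : H, σ h w ∂μH ∈ fixedSubmodule σ H := by
  intro k hk
  refine ((σ k).toContinuousLinearEquiv.integral_comp_comm _).symm.trans ?_
  have hcomp : ∀ h : H, σ k (σ h w) = σ ((⟨k, hk⟩ : H) * h : H) w := fun h => by
    rw [Subgroup.coe_mul, map_mul, LinearIsometryEquiv.coe_mul, Function.comp_apply]
  simp only [LinearIsometryEquiv.coe_toContinuousLinearEquiv, hcomp]
  exact integral_mul_left_eq_self (fun h : H => σ h w) _

theorem inner_integral_apply_of_mem_fixedSubmodule [TopologicalSpace G] [CompleteSpace E]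
    [CompactSpace H] [OpensMeasurableSpace H] [IsProbabilityMeasure μH]
    (hσ : ∀ v : E, Continuous fun g => σ g v) (w : E) {z : E}
    (hz : z ∈ fixedSubmodule σ H) :
    ⟪z, ∫ h : H, σ h w ∂μH⟫_ℂ = ⟪z, w⟫_ℂ := by
  have hint : Integrable (fun h : H => σ h w) μH :=
    ((hσ w).comp continuous_subtype_val).integrable_of_hasCompactSupport
      (HasCompactSupport.of_compactSpace _)
  have hunitary : ∀ h : H, ⟪z, σ h w⟫_ℂ = ⟪z, w⟫_ℂ := fun h => by
    rw [← hz h h.2, LinearIsometryEquiv.inner_map_map, hz h h.2]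
  rw [← integral_inner hint, funext hunitary, integral_const, probReal_univ, one_smul]

end FixedVectors

theorem eq_apply_of_mem_of_inner_eq {E : Type*} [NormedAddCommGroup E] [InnerProductSpace ℂ E]
    {K : Submodule ℂ E} {P : E → E} (hPK : ∀ v, P v ∈ K)
    (hPorth : ∀ v, ∀ z ∈ K, ⟪v - P v, z⟫_ℂ = 0) {u w : E} (hu : u ∈ K)
    (huw : ∀ z ∈ K, ⟪z, u⟫_ℂ = ⟪z, w⟫_ℂ) : u = P w := by
  have hmem : u - P w ∈ K := K.sub_mem hu (hPK w)
  have hself : ⟪u - P w, u - P w⟫_ℂ = 0 := by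
    rw [inner_sub_right, huw _ hmem, ← inner_sub_right, inner_eq_zero_symm]
    exact hPorth w _ hmem
  exact sub_eq_zero.mp (inner_self_eq_zero.mp hself)

theorem stmt_14_general {G E : Type*}
    [Group G] [TopologicalSpace G] [IsTopologicalGroup G]
    [MeasurableSpace G] [BorelSpace G]
    (μG : Measure G) [μG.IsHaarMeasure] [μG.IsMulRightInvariant]
    [NormedAddCommGroup E] [InnerProductSpace ℂ E] [CompleteSpace E]
    (H : Subgroup G) (hHcomp : IsCompact (H : Set G))
    (μH : Measure H) [μH.IsHaarMeasure] [IsProbabilityMeasure μH]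
    (σ : G →* (E ≃ₗᵢ[ℂ] E))
    (hσcont : ∀ v : E, Continuous fun g : G => σ g v)
    (P : E →L[ℂ] E)
    (hPfix : ∀ v : E, ∀ h ∈ H, σ h (P v) = P v)
    (hPorth : ∀ v w : E, (∀ h ∈ H, σ h w = w) → ⟪v - P v, w⟫_ℂ = 0)
    (f : G → ℂ) (hf : Continuous f) (hfc : HasCompactSupport f) :
    ∀ v : E,
      (∫ g, (∫ h : H, f (g * (h : G)) ∂μH) • σ g⁻¹ v ∂μG)
        = P (∫ g, f g • σ g⁻¹ v ∂μG) := by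
  intro v
  have : CompactSpace H := isCompact_iff_compactSpace.mp hHcomp
  have : BorelSpace H := Subtype.borelSpace (H : Set G)
  change groupFourierCoeff σ μG _ v = P (groupFourierCoeff σ μG f v)
  rw [groupFourierCoeff_integral_comp_mul σ hσcont μG hHcomp μH hf hfc]
  simp only [groupFourierCoeff_comp_mul_right]
  exact eq_apply_of_mem_of_inner_eq (K := fixedSubmodule σ H) (hPfix ·) hPorth
    (integral_apply_mem_fixedSubmodule σ μH _)
    fun z hz => inner_integral_apply_of_mem_fixedSubmodule σ μH hσcont _ hz

/-- Let `G` be a unimodular locally compact Hausdorff group with Haar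
measure `μG`, `H ⊆ G` a compact subgroup with normalized Haar probability measure `μH`,
`σ` a continuous unitary representation of `G` on a complex Hilbert space `E`, and `P`
the orthogonal projection onto the `H`-fixed vectors (characterized by: `P v` is
`H`-fixed and `v - P v` is orthogonal to all `H`-fixed vectors).  Then for every
`f ∈ C_c(G)` and `v ∈ E`,
`∫_G (∫_H f (g h) dμH(h)) • σ(g)⁻¹ v dμG(g) = P (∫_G f g • σ(g)⁻¹ v dμG(g))`,
i.e. the Fourier coefficient of the right orbital mean `A_R f` equals `P ∘ f̂(σ)`. -/
theorem stmt_14 {G E : Type*}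
    [Group G] [TopologicalSpace G] [IsTopologicalGroup G] [LocallyCompactSpace G] [T2Space G]
    [MeasurableSpace G] [BorelSpace G]
    (μG : Measure G) [μG.IsHaarMeasure] [μG.IsMulRightInvariant]
    [NormedAddCommGroup E] [InnerProductSpace ℂ E] [CompleteSpace E]
    (H : Subgroup G) (hHcomp : IsCompact (H : Set G))
    (μH : Measure H) [μH.IsHaarMeasure] [IsProbabilityMeasure μH]
    (σ : G →* (E ≃ₗᵢ[ℂ] E))
    (hσcont : ∀ v : E, Continuous fun g : G => σ g v)
    (P : E →L[ℂ] E)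
    (hPfix : ∀ v : E, ∀ h ∈ H, σ h (P v) = P v)
    (hPorth : ∀ v w : E, (∀ h ∈ H, σ h w = w) → ⟪v - P v, w⟫_ℂ = 0)
    (f : G → ℂ) (hf : Continuous f) (hfc : HasCompactSupport f) :
    ∀ v : E,
      (∫ g, (∫ h : H, f (g * (h : G)) ∂μH) • σ g⁻¹ v ∂μG)
        = P (∫ g, f g • σ g⁻¹ v ∂μG) :=
  stmt_14_general μG H hHcomp μH σ hσcont P hPfix hPorth f hf hfc
end
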